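/- For all monomials X and Y in the free monoid on 𝒜, the polynomial X·[Y] − [Y]·X lies in the ideal ℐ. -/

import Mathlib

open scoped BigOperators

/-! ### Generic definitions over an arbitrary alphabet -/

section Generic

variable {α : Type*} {K : Type*} [Field K]

/-- The monomial (word) `w`, viewed as an element of the free associative algebra
`K⟨α⟩ = MonoidAlgebra K (FreeMonoid α)`. -/
noncomputable def Mw (w : List α) : MonoidAlgebra K (FreeMonoid α) :=
  MonoidAlgebra.single (FreeMonoid.ofList w) 1

/-- Strict deglex order on words, induced by a strict order `r` on the letters. -/
def WLt (r : α → α → Prop) (u v : List α) : Prop :=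
  u.length < v.length ∨ (u.length = v.length ∧ List.Lex r u v)

/-- Reflexive deglex order on words. -/
def WLe (r : α → α → Prop) (u v : List α) : Prop :=
  WLt r u v ∨ u = v

/-- `w` is the deglex-leading monomial of `f`. -/
def IsLM (r : α → α → Prop) (f : MonoidAlgebra K (FreeMonoid α)) (w : List α) : Prop :=
  FreeMonoid.ofList w ∈ f.coeff.support ∧
    ∀ u ∈ f.coeff.support, u ≠ FreeMonoid.ofList w → WLt r (FreeMonoid.toList u) w

/-- `p` is a submonomial of `w`. -/
def Submono (p w : List α) : Prop := ∃ l r, w = l ++ p ++ r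

/-- `f` is reduced to zero by the set `G`: `f = Σ λ_t · A_t · g_t · B_t` with
`T(A_t · g_t · B_t) ⪯ T(f)` for every `t` (and `f = 0` qualifies vacuously). -/
def Red0 (r : α → α → Prop) (G : Set (MonoidAlgebra K (FreeMonoid α)))
    (f : MonoidAlgebra K (FreeMonoid α)) : Prop :=
  f = 0 ∨
    ∃ (N : ℕ) (lam : Fin N → K) (A B : Fin N → List α)
      (g : Fin N → MonoidAlgebra K (FreeMonoid α)) (w : List α),
      (∀ t, g t ∈ G) ∧
      f = ∑ t, lam t • (Mw (A t) * g t * Mw (B t)) ∧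
      IsLM r f w ∧
      ∀ t u, IsLM r (Mw (A t) * g t * Mw (B t)) u → WLe r u w

/-- `(f, R; g, L)` is an S-quadruplet of `G`:  `f, g ∈ G`, `0 < |L| < |f|`,
`0 < |R| < |g|`, and `T(f)·R = L·T(g)`. -/
def IsSQuad (r : α → α → Prop) (G : Set (MonoidAlgebra K (FreeMonoid α)))
    (f : MonoidAlgebra K (FreeMonoid α)) (R : List α)
    (g : MonoidAlgebra K (FreeMonoid α)) (L : List α) : Prop :=
  f ∈ G ∧ g ∈ G ∧
    ∃ tf tg, IsLM r f tf ∧ IsLM r g tg ∧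
      0 < L.length ∧ L.length < tf.length ∧
      0 < R.length ∧ R.length < tg.length ∧
      tf ++ R = L ++ tg

/-- A clear S-quadruplet: the leader `T(f)·R`, with its first and last letters deleted,
has no leading monomial of an element of `G` as a submonomial. -/
def IsClearSQuad (r : α → α → Prop) (G : Set (MonoidAlgebra K (FreeMonoid α)))
    (f : MonoidAlgebra K (FreeMonoid α)) (R : List α)
    (g : MonoidAlgebra K (FreeMonoid α)) (L : List α) : Prop :=
  IsSQuad r G f R g L ∧
    ∀ tf, IsLM r f tf → ∀ g' ∈ G, ∀ tg', IsLM r g' tg' →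
      ¬ Submono tg' (((tf ++ R).drop 1).dropLast)

end Generic

/-! ### The quaternionic alphabet -/

/-- The alphabet `𝒜`: quaternionic letters `q l`, conjugate letters `qbar l` (`l < n`),
and the basis letters `i, j, k`. -/
inductive Letter (n : ℕ) where
  | q (l : Fin n)
  | qbar (l : Fin n)
  | i
  | j
  | k
deriving DecidableEq

namespace Letter

/-- Rank realizing the conjugate-alternating order
`q 0 ≺ qbar 0 ≺ q 1 ≺ qbar 1 ≺ ⋯ ≺ i ≺ j ≺ k`. -/
def rank {n : ℕ} : Letter n → ℕ
  | q l => 2 * l.val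
  | qbar l => 2 * l.val + 1
  | i => 2 * n
  | j => 2 * n + 1
  | k => 2 * n + 2

/-- The conjugate letter: `q l ↔ qbar l`; basis letters are fixed. -/
def conj {n : ℕ} : Letter n → Letter n
  | q l => qbar l
  | qbar l => q l
  | i => i
  | j => j
  | k => k

/-- Whether a letter is one of the basis letters `i, j, k` (the set `ℰ`). -/
def isE {n : ℕ} : Letter n → Bool
  | i => true
  | j => true
  | k => true
  | _ => false

end Letter

/-- The conjugate-alternating strict order on letters. -/
def llt {n : ℕ} (a b : Letter n) : Prop := a.rank < b.rank

/-- The conjugate-alternating order on letters (reflexive version). -/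
def lle {n : ℕ} (a b : Letter n) : Prop := a.rank ≤ b.rank

/-- The free associative algebra `K⟨𝒜⟩`. -/
abbrev FA (n : ℕ) (K : Type*) [Field K] := MonoidAlgebra K (FreeMonoid (Letter n))

/-- The bracket of a monomial: `[w] = w + w̄`, where conjugation is the anti-automorphism
sending `q l ↦ qbar l`, `qbar l ↦ q l` and `e ↦ -e` for basis letters `e`. -/
noncomputable def br {n : ℕ} {K : Type*} [Field K] (w : List (Letter n)) : FA n K :=
  Mw w + ((-1 : K) ^ (w.filter (fun a => a.isE)).length : K) • Mw ((w.map Letter.conj).reverse)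

/-! ### The defining ideal ℐ -/

/-- The generators of the defining ideal `ℐ`:
(1) the multiplication table of `i, j, k`;
(2) the conjugate-defining relations `2q̄ + q + iqi + jqj + kqk`;
(3) commutativity of the coordinate brackets `[q]`, `[iq]`, `[jq]`, `[kq]`
with every letter. -/
def Igens (n : ℕ) (K : Type*) [Field K] : Set (FA n K) :=
  {p | p = Mw [Letter.i, Letter.i] + 1 ∨ p = Mw [Letter.j, Letter.j] + 1 ∨
       p = Mw [Letter.k, Letter.k] + 1 ∨
       p = Mw [Letter.i, Letter.j] - Mw [Letter.k] ∨
       p = Mw [Letter.j, Letter.i] + Mw [Letter.k] ∨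
       p = Mw [Letter.i, Letter.k] + Mw [Letter.j] ∨
       p = Mw [Letter.k, Letter.i] - Mw [Letter.j] ∨
       p = Mw [Letter.k, Letter.j] + Mw [Letter.i] ∨
       p = Mw [Letter.j, Letter.k] - Mw [Letter.i]} ∪
  {p | ∃ l : Fin n,
       p = (2 : K) • Mw [Letter.qbar l] + Mw [Letter.q l]
           + Mw [Letter.i, Letter.q l, Letter.i]
           + Mw [Letter.j, Letter.q l, Letter.j]
           + Mw [Letter.k, Letter.q l, Letter.k]} ∪
  {p | ∃ (a : Letter n) (l : Fin n),
       p = Mw [a] * br [Letter.q l] - br [Letter.q l] * Mw [a] ∨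
       p = Mw [a] * br [Letter.i, Letter.q l] - br [Letter.i, Letter.q l] * Mw [a] ∨
       p = Mw [a] * br [Letter.j, Letter.q l] - br [Letter.j, Letter.q l] * Mw [a] ∨
       p = Mw [a] * br [Letter.k, Letter.q l] - br [Letter.k, Letter.q l] * Mw [a]}

/-- The defining ideal `ℐ` of the quaternionic polynomial algebra. -/
noncomputable def Iideal (n : ℕ) (K : Type*) [Field K] : TwoSidedIdeal (FA n K) :=
  TwoSidedIdeal.span (Igens n K)

/-! ### The conjectured Gröbner basis BG (parametrized by a letter substitution σ) -/

/-- The monomial `w`, with the substitution `σ` applied letterwise. -/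
noncomputable def Mσ {n : ℕ} {K : Type*} [Field K] (σ : Letter n → Letter n) (w : List (Letter n)) :
    FA n K := Mw (w.map σ)

/-- The bracket `[w]`, with the substitution `σ` applied letterwise before bracketing. -/
noncomputable def Brσ {n : ℕ} {K : Type*} [Field K] (σ : Letter n → Letter n) (w : List (Letter n)) :
    FA n K := br (w.map σ)

/-- The family `BGm` (`m ≥ 5`), with substitution `σ` applied:
`3·[2·A·y·1] − [2·A·y·1]·3` where `A` is a nonempty non-decreasing word over `𝒬 ∪ 𝒬̄` with
`3 ⪯ A`, every letter of `A` is `≺ y`, and `y ∈ 𝒬 ∪ ℰ`. -/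
def BGmSet (n : ℕ) (K : Type*) [Field K] (σ : Letter n → Letter n) : Set (FA n K) :=
  {p | ∃ (a b c : Fin n) (A : List (Letter n)) (y : Letter n),
        a < b ∧ b < c ∧ A ≠ [] ∧
        (∀ x ∈ A, ∃ l : Fin n, x = Letter.q l ∨ x = Letter.qbar l) ∧
        List.Chain' lle (Letter.q c :: A) ∧
        ((∃ l : Fin n, y = Letter.q l) ∨ y.isE) ∧
        (∀ x ∈ A, llt x y) ∧
        p = Mσ σ [Letter.q c] * Brσ σ ([Letter.q b] ++ A ++ [y, Letter.q a])
            - Brσ σ ([Letter.q b] ++ A ++ [y, Letter.q a]) * Mσ σ [Letter.q c]}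

/-- The set `BG` (with letter substitution `σ`; `BG` itself is `BGset n K id`).
Here `a ≺ b ≺ c ≺ d` in `Fin n` play the roles of the letters `1 ≺ 2 ≺ 3 ≺ 4` of `𝒬`,
and `e, e'` are basis letters. -/
def BGset (n : ℕ) (K : Type*) [Field K] (σ : Letter n → Letter n) : Set (FA n K) :=
  -- BG2(a)
  {p | p = Mσ σ [Letter.i, Letter.i] + 1 ∨ p = Mσ σ [Letter.j, Letter.j] + 1 ∨
       p = Mσ σ [Letter.k, Letter.k] + 1 ∨
       p = Mσ σ [Letter.i, Letter.j] - Mσ σ [Letter.k] ∨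
       p = Mσ σ [Letter.j, Letter.i] + Mσ σ [Letter.k] ∨
       p = Mσ σ [Letter.j, Letter.k] - Mσ σ [Letter.i] ∨
       p = Mσ σ [Letter.k, Letter.j] + Mσ σ [Letter.i] ∨
       p = Mσ σ [Letter.k, Letter.i] - Mσ σ [Letter.j] ∨
       p = Mσ σ [Letter.i, Letter.k] + Mσ σ [Letter.j]} ∪
  -- BG2(b)
  {p | ∃ a : Fin n,
       p = Mσ σ [Letter.qbar a, Letter.q a] - Mσ σ [Letter.q a, Letter.qbar a]} ∪
  {p | ∃ a b : Fin n, a < b ∧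
       (p = Brσ σ [Letter.q b] * Mσ σ [Letter.qbar a]
            - Mσ σ [Letter.qbar a] * Brσ σ [Letter.q b] ∨
        p = Brσ σ [Letter.q b] * Mσ σ [Letter.q a]
            - Mσ σ [Letter.q a] * Brσ σ [Letter.q b])} ∪
  -- BG2(c)
  {p | ∃ a b : Fin n, a < b ∧
       p = Mσ σ [Letter.q b] * Brσ σ [Letter.q a] - Brσ σ [Letter.q a] * Mσ σ [Letter.q b]} ∪
  {p | ∃ (a : Fin n) (e : Letter n), e.isE ∧
       p = Mσ σ [e] * Brσ σ [Letter.q a] - Brσ σ [Letter.q a] * Mσ σ [e]} ∪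
  -- BG3(a)
  {p | ∃ a : Fin n,
       p = Mσ σ [Letter.k, Letter.q a, Letter.k] + Mσ σ [Letter.j, Letter.q a, Letter.j]
           + Mσ σ [Letter.i, Letter.q a, Letter.i]
           + (2 : K) • Mσ σ [Letter.qbar a] + Mσ σ [Letter.q a]} ∪
  -- BG3(b)
  {p | ∃ a b c : Fin n, a < b ∧ b < c ∧
       (p = Brσ σ [Letter.q c, Letter.q b] * Mσ σ [Letter.q a]
            - Mσ σ [Letter.q a] * Brσ σ [Letter.q c, Letter.q b] ∨
        p = Brσ σ [Letter.q c, Letter.q a] * Mσ σ [Letter.qbar b]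
            - Mσ σ [Letter.qbar b] * Brσ σ [Letter.q c, Letter.q a] ∨
        p = Brσ σ [Letter.q c, Letter.q a] * Mσ σ [Letter.q b]
            - Mσ σ [Letter.q b] * Brσ σ [Letter.q c, Letter.q a])} ∪
  {p | ∃ a b : Fin n, a < b ∧
       (p = Brσ σ [Letter.q b, Letter.q a] * Mσ σ [Letter.qbar a]
            - Mσ σ [Letter.qbar a] * Brσ σ [Letter.q b, Letter.q a] ∨
        p = Brσ σ [Letter.q b, Letter.q a] * Mσ σ [Letter.q a]
            - Mσ σ [Letter.q a] * Brσ σ [Letter.q b, Letter.q a])} ∪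
  {p | ∃ (a b : Fin n) (e : Letter n), a < b ∧ e.isE ∧
       (p = Brσ σ [e, Letter.q b] * Mσ σ [Letter.q a]
            - Mσ σ [Letter.q a] * Brσ σ [e, Letter.q b] ∨
        p = Brσ σ [e, Letter.q a] * Mσ σ [Letter.q b]
            - Mσ σ [Letter.q b] * Brσ σ [e, Letter.q a] ∨
        p = Brσ σ [e, Letter.q a] * Mσ σ [Letter.qbar b]
            - Mσ σ [Letter.qbar b] * Brσ σ [e, Letter.q a])} ∪
  {p | ∃ (a : Fin n) (e : Letter n), e.isE ∧
       (p = Brσ σ [e, Letter.q a] * Mσ σ [Letter.q a]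
            - Mσ σ [Letter.q a] * Brσ σ [e, Letter.q a] ∨
        p = Brσ σ [e, Letter.q a] * Mσ σ [Letter.qbar a]
            - Mσ σ [Letter.qbar a] * Brσ σ [e, Letter.q a])} ∪
  {p | ∃ a : Fin n,
       (p = Brσ σ [Letter.j, Letter.q a] * Mσ σ [Letter.i]
            - Mσ σ [Letter.i] * Brσ σ [Letter.j, Letter.q a] ∨
        p = Brσ σ [Letter.k, Letter.q a] * Mσ σ [Letter.i]
            - Mσ σ [Letter.i] * Brσ σ [Letter.k, Letter.q a] ∨
        p = Brσ σ [Letter.k, Letter.q a] * Mσ σ [Letter.j]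
            - Mσ σ [Letter.j] * Brσ σ [Letter.k, Letter.q a])} ∪
  -- BG3(c)
  {p | ∃ a b : Fin n, a < b ∧
       p = Mσ σ [Letter.q b] * Brσ σ [Letter.q b, Letter.q a]
           - Brσ σ [Letter.q b, Letter.q a] * Mσ σ [Letter.q b]} ∪
  -- BG4
  {p | ∃ a b c : Fin n, a < b ∧ b < c ∧
       p = Mσ σ [Letter.q c] * Brσ σ [Letter.q b, Letter.q c, Letter.q a]
           - Brσ σ [Letter.q b, Letter.q c, Letter.q a] * Mσ σ [Letter.q c]} ∪
  {p | ∃ a b c d : Fin n, a < b ∧ b < c ∧ c < d ∧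
       p = Mσ σ [Letter.q c] * Brσ σ [Letter.q b, Letter.q d, Letter.q a]
           - Brσ σ [Letter.q b, Letter.q d, Letter.q a] * Mσ σ [Letter.q c]} ∪
  {p | ∃ (a b c : Fin n) (e : Letter n), a < b ∧ b < c ∧ e.isE ∧
       p = Mσ σ [Letter.q c] * Brσ σ [Letter.q b, e, Letter.q a]
           - Brσ σ [Letter.q b, e, Letter.q a] * Mσ σ [Letter.q c]} ∪
  {p | ∃ (a b : Fin n) (e e' : Letter n), a < b ∧ e.isE ∧ e'.isE ∧ lle e' e ∧
       ¬(e' = Letter.k ∧ e = Letter.k) ∧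
       p = Mσ σ [e'] * Brσ σ [Letter.q b, e, Letter.q a]
           - Brσ σ [Letter.q b, e, Letter.q a] * Mσ σ [e']} ∪
  -- BGm, m ≥ 5
  BGmSet n K σ

/-- The conjectured Gröbner basis `BG`. -/
def BG (n : ℕ) (K : Type*) [Field K] : Set (FA n K) := BGset n K id

/-- The normal-form shape of Theorem "Normal form": `M` is a submonomial of a word
`A_1 p_1 f_1 ⋯ A_r p_r f_r A_{r+1} e_1 f_{r+1} ⋯ e_s f_{r+s} e_{s+1}` satisfying
conditions (i)–(v).  (Indices are 0-based: `A 0, …, A r`; `p 0, …, p (r-1)`;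
`f 0, …, f (r+s-1)`; `e 0, …, e s`.) -/
def NormalShape (n : ℕ) (M : List (Letter n)) : Prop :=
  ∃ (r s : ℕ) (A : ℕ → List (Letter n)) (p f e : ℕ → Letter n),
    (∀ t < r, ∃ l : Fin n, p t = Letter.q l) ∧
    (∀ t < r + s, ∃ l : Fin n, f t = Letter.q l) ∧
    (∀ t < s + 1, (e t).isE) ∧
    (∀ t1 < s + 1, ∀ t2 < s + 1, e t1 = Letter.k → e t2 = Letter.k → t1 = t2) ∧
    (∀ t < r + 1,
      (∀ x ∈ A t, ∃ l : Fin n, x = Letter.q l ∨ x = Letter.qbar l) ∧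
      List.Chain' lle (A t)) ∧
    List.Chain' lle ((List.range r).map p ++ (List.range (s + 1)).map e) ∧
    List.Chain' lle ((List.range (r + s)).map f) ∧
    List.Chain' lle
      ((List.range r).flatMap (fun t => A t ++ [p t]) ++ A r ++ (List.range (s + 1)).map e) ∧
    (∀ t < r, llt (f t) (p t) ∧ ∀ x ∈ A t, llt x (p t)) ∧
    Submono M
      ((List.range r).flatMap (fun t => A t ++ [p t, f t]) ++ A r
        ++ (List.range s).flatMap (fun t => [e t, f (r + t)]) ++ [e s])

/-- A conjugation substitution: for each `l`, either both `q l` and `qbar l` are fixed or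
both are swapped; the basis letters are fixed. -/
def IsConjSub {n : ℕ} (σ : Letter n → Letter n) : Prop :=
  (∀ l : Fin n,
    (σ (Letter.q l) = Letter.q l ∧ σ (Letter.qbar l) = Letter.qbar l) ∨
    (σ (Letter.q l) = Letter.qbar l ∧ σ (Letter.qbar l) = Letter.q l)) ∧
  σ Letter.i = Letter.i ∧ σ Letter.j = Letter.j ∧ σ Letter.k = Letter.k

/-- The decomposition property for `f·R` from Proposition "k-decomp equiv":
`f·R = Σ_i λ_i·L_i·g_i·R_i` with `T(L_i·g_i·R_i) ⪯ T(f)·R` for every `i`, and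
`T(L_i·g_i·R_i) ≺ T(f)·R` whenever `L_i` is the empty monomial. -/
def SDecomp {α : Type*} {K : Type*} [Field K] (r : α → α → Prop)
    (G : Set (MonoidAlgebra K (FreeMonoid α)))
    (f : MonoidAlgebra K (FreeMonoid α)) (R : List α) : Prop :=
  ∃ (N : ℕ) (lam : Fin N → K) (Li Ri : Fin N → List α)
    (gi : Fin N → MonoidAlgebra K (FreeMonoid α)),
    (∀ i, gi i ∈ G) ∧
    f * Mw R = ∑ i, lam i • (Mw (Li i) * gi i * Mw (Ri i)) ∧
    ∀ tf, IsLM r f tf →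
      (∀ i u, IsLM r (Mw (Li i) * gi i * Mw (Ri i)) u → WLe r u (tf ++ R)) ∧
      (∀ i, Li i = [] →
        ∀ u, IsLM r (Mw (Li i) * gi i * Mw (Ri i)) u → WLt r u (tf ++ R))

/-- `G` is a Gröbner basis (w.r.t. the deglex order induced by `r`) of the two-sided
ideal `J`: `G ⊆ J`, `G` generates `J`, and the leading monomial of every nonzero element
of `J` has the leading monomial of some element of `G` as a submonomial. -/
def IsGroebnerBasis {α : Type*} {K : Type*} [Field K] (r : α → α → Prop)
    (G : Set (MonoidAlgebra K (FreeMonoid α)))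
    (J : TwoSidedIdeal (MonoidAlgebra K (FreeMonoid α))) : Prop :=
  (∀ g ∈ G, g ∈ J) ∧
  TwoSidedIdeal.span G = J ∧
  ∀ h, h ∈ J → h ≠ 0 →
    ∃ th, IsLM r h th ∧ ∃ g ∈ G, ∃ tg, IsLM r g tg ∧ Submono tg th

/-! ### Auxiliary development for Statement 0 -/

namespace Stmt0

open Letter

section MwLemmas

variable {α : Type*} {K : Type*} [Field K]

theorem Mw_nil : (Mw ([] : List α) : MonoidAlgebra K (FreeMonoid α)) = 1 := rfl

theorem Mw_append (u v : List α) :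
    (Mw (u ++ v) : MonoidAlgebra K (FreeMonoid α)) = Mw u * Mw v := by
  simp [Mw, MonoidAlgebra.single_mul_single, FreeMonoid.ofList_append]

theorem Mw_cons (a : α) (u : List α) :
    (Mw (a :: u) : MonoidAlgebra K (FreeMonoid α)) = Mw [a] * Mw u := by
  simpa using Mw_append [a] u

theorem Mw_two (a b : α) :
    (Mw [a, b] : MonoidAlgebra K (FreeMonoid α)) = Mw [a] * Mw [b] :=
  Mw_append [a] [b]

theorem Mw_three (a b c : α) :
    (Mw [a, b, c] : MonoidAlgebra K (FreeMonoid α)) = Mw [a] * Mw [b] * Mw [c] := by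
  rw [← Mw_two, ← Mw_append]
  rfl

end MwLemmas

section Quot

variable (n : ℕ) (K : Type*) [Field K]

/-- The quotient map onto `K⟨𝒜⟩/ℐ`. -/
noncomputable def pq : FA n K →+* (Iideal n K).ringCon.Quotient :=
  (Iideal n K).ringCon.mk'

theorem pq_surj : Function.Surjective (pq n K) :=
  fun y => Quot.inductionOn y fun x => ⟨x, rfl⟩

theorem mem_Iideal_iff (x : FA n K) : x ∈ Iideal n K ↔ pq n K x = 0 := by
  conv_lhs => rw [← TwoSidedIdeal.ker_ringCon_mk' (Iideal n K)]
  exact TwoSidedIdeal.mem_ker _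

theorem pq_gen {x : FA n K} (h : x ∈ Igens n K) : pq n K x = 0 :=
  (mem_Iideal_iff n K x).1 (TwoSidedIdeal.subset_span h)

/-- Image of a single letter. -/
noncomputable def La (a : Letter n) : (Iideal n K).ringCon.Quotient :=
  pq n K (Mw [a])

theorem pq_alg_comm (c : K) (y : (Iideal n K).ringCon.Quotient) :
    Commute (pq n K (algebraMap K (FA n K) c)) y := by
  obtain ⟨g, rfl⟩ := pq_surj n K y
  show _ * _ = _ * _
  rw [← map_mul, ← map_mul, Algebra.commutes]

theorem central_of_comm_letters {x : (Iideal n K).ringCon.Quotient}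
    (h : ∀ a : Letter n, Commute (La n K a) x) :
    ∀ y, Commute y x := by
  have hw : ∀ w : List (Letter n), Commute (pq n K (Mw w)) x := by
    intro w
    induction w with
    | nil => rw [Mw_nil, map_one]; exact Commute.one_left x
    | cons a u ih => rw [Mw_cons, map_mul]; exact (h a).mul_left ih
  intro y
  obtain ⟨f, rfl⟩ := pq_surj n K y
  induction f using MonoidAlgebra.induction_on with
  | of g =>
    have := hw (FreeMonoid.toList g)
    simpa [Mw, MonoidAlgebra.of_apply] using this
  | add f g hf hg => rw [map_add]; exact hf.add_left hg
  | smul r f hf =>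
    rw [Algebra.smul_def, map_mul]
    exact (pq_alg_comm n K r x).mul_left hf

end Quot

end Stmt0

namespace Stmt0

open Letter

section Brackets

variable (n : ℕ) (K : Type*) [Field K]

theorem br_q (l : Fin n) :
    (br [Letter.q l] : FA n K) = Mw [Letter.q l] + Mw [Letter.qbar l] := by
  simp [br, Letter.isE, Letter.conj]

theorem br_iq (l : Fin n) :
    (br [Letter.i, Letter.q l] : FA n K)
      = Mw [Letter.i, Letter.q l] - Mw [Letter.qbar l, Letter.i] := by
  simp [br, Letter.isE, Letter.conj, sub_eq_add_neg]

theorem br_jq (l : Fin n) :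
    (br [Letter.j, Letter.q l] : FA n K)
      = Mw [Letter.j, Letter.q l] - Mw [Letter.qbar l, Letter.j] := by
  simp [br, Letter.isE, Letter.conj, sub_eq_add_neg]

theorem br_kq (l : Fin n) :
    (br [Letter.k, Letter.q l] : FA n K)
      = Mw [Letter.k, Letter.q l] - Mw [Letter.qbar l, Letter.k] := by
  simp [br, Letter.isE, Letter.conj, sub_eq_add_neg]

end Brackets

end Stmt0

namespace Stmt0

open Letter

section Table

variable (n : ℕ) (K : Type*) [Field K]

theorem La_mul (a b : Letter n) :
    La n K a * La n K b = pq n K (Mw [a, b]) := by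
  rw [La, La, ← map_mul]
  congr 1
  exact (Mw_append [a] [b]).symm

theorem La_mul3 (a b c : Letter n) :
    La n K a * La n K b * La n K c = pq n K (Mw [a, b, c]) := by
  rw [La_mul, La, ← map_mul]
  congr 1
  exact (Mw_append [a, b] [c]).symm

-- membership helpers
theorem gen1_mem {x : FA n K}
    (h : x = Mw [Letter.i, Letter.i] + 1 ∨ x = Mw [Letter.j, Letter.j] + 1 ∨
       x = Mw [Letter.k, Letter.k] + 1 ∨
       x = Mw [Letter.i, Letter.j] - Mw [Letter.k] ∨
       x = Mw [Letter.j, Letter.i] + Mw [Letter.k] ∨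
       x = Mw [Letter.i, Letter.k] + Mw [Letter.j] ∨
       x = Mw [Letter.k, Letter.i] - Mw [Letter.j] ∨
       x = Mw [Letter.k, Letter.j] + Mw [Letter.i] ∨
       x = Mw [Letter.j, Letter.k] - Mw [Letter.i]) : x ∈ Igens n K :=
  Or.inl (Or.inl h)

theorem sq_i : La n K Letter.i * La n K Letter.i = -1 := by
  have h := pq_gen n K (gen1_mem n K (Or.inl rfl))
  rw [map_add, map_one] at h
  rw [La_mul]
  exact eq_neg_of_add_eq_zero_left h

theorem sq_j : La n K Letter.j * La n K Letter.j = -1 := by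
  have h := pq_gen n K (gen1_mem n K (Or.inr (Or.inl rfl)))
  rw [map_add, map_one] at h
  rw [La_mul]
  exact eq_neg_of_add_eq_zero_left h

theorem sq_k : La n K Letter.k * La n K Letter.k = -1 := by
  have h := pq_gen n K (gen1_mem n K (Or.inr (Or.inr (Or.inl rfl))))
  rw [map_add, map_one] at h
  rw [La_mul]
  exact eq_neg_of_add_eq_zero_left h

theorem mul_ij : La n K Letter.i * La n K Letter.j = La n K Letter.k := by
  have h := pq_gen n K (gen1_mem n K (Or.inr (Or.inr (Or.inr (Or.inl rfl)))))
  rw [map_sub] at h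
  rw [La_mul]
  rw [sub_eq_zero] at h
  exact h

theorem mul_ji : La n K Letter.j * La n K Letter.i = -La n K Letter.k := by
  have h := pq_gen n K (gen1_mem n K (Or.inr (Or.inr (Or.inr (Or.inr (Or.inl rfl))))))
  rw [map_add] at h
  rw [La_mul]
  exact eq_neg_of_add_eq_zero_left h

/-- The conjugate-defining relation in the quotient. -/
theorem rel2 (l : Fin n) :
    2 * La n K (Letter.qbar l) + La n K (Letter.q l)
      + La n K Letter.i * La n K (Letter.q l) * La n K Letter.i
      + La n K Letter.j * La n K (Letter.q l) * La n K Letter.j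
      + La n K Letter.k * La n K (Letter.q l) * La n K Letter.k = 0 := by
  have h := pq_gen n K (x := (2 : K) • Mw [Letter.qbar l] + Mw [Letter.q l]
           + Mw [Letter.i, Letter.q l, Letter.i]
           + Mw [Letter.j, Letter.q l, Letter.j]
           + Mw [Letter.k, Letter.q l, Letter.k]) (Or.inl (Or.inr ⟨l, rfl⟩))
  rw [Algebra.smul_def, map_ofNat] at h
  simp only [map_add, map_mul, map_ofNat] at h
  simp only [Mw_three, map_mul] at h
  simp only [La]
  exact h

end Table

end Stmt0

namespace Stmt0

open Letter

section Traces

variable (n : ℕ) (K : Type*) [Field K]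

/-- The four coordinate traces. -/
noncomputable def t0 (l : Fin n) : (Iideal n K).ringCon.Quotient := pq n K (br [Letter.q l])
noncomputable def t1 (l : Fin n) : (Iideal n K).ringCon.Quotient :=
  pq n K (br [Letter.i, Letter.q l])
noncomputable def t2 (l : Fin n) : (Iideal n K).ringCon.Quotient :=
  pq n K (br [Letter.j, Letter.q l])
noncomputable def t3 (l : Fin n) : (Iideal n K).ringCon.Quotient :=
  pq n K (br [Letter.k, Letter.q l])

theorem t0_eq (l : Fin n) :
    t0 n K l = La n K (Letter.q l) + La n K (Letter.qbar l) := by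
  rw [t0, br_q, map_add]; rfl

theorem t1_eq (l : Fin n) :
    t1 n K l = La n K Letter.i * La n K (Letter.q l)
      - La n K (Letter.qbar l) * La n K Letter.i := by
  rw [t1, br_iq, map_sub, Mw_two, Mw_two, map_mul, map_mul]; rfl

theorem t2_eq (l : Fin n) :
    t2 n K l = La n K Letter.j * La n K (Letter.q l)
      - La n K (Letter.qbar l) * La n K Letter.j := by
  rw [t2, br_jq, map_sub, Mw_two, Mw_two, map_mul, map_mul]; rfl

theorem t3_eq (l : Fin n) :
    t3 n K l = La n K Letter.k * La n K (Letter.q l)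
      - La n K (Letter.qbar l) * La n K Letter.k := by
  rw [t3, br_kq, map_sub, Mw_two, Mw_two, map_mul, map_mul]; rfl

theorem t0_central (l : Fin n) : ∀ y, Commute y (t0 n K l) := by
  apply central_of_comm_letters
  intro a
  have h := pq_gen n K (x := Mw [a] * br [Letter.q l] - br [Letter.q l] * Mw [a])
    (Or.inr ⟨a, l, Or.inl rfl⟩)
  rw [map_sub, map_mul, map_mul, sub_eq_zero] at h
  exact h

theorem t1_central (l : Fin n) : ∀ y, Commute y (t1 n K l) := by
  apply central_of_comm_letters
  intro a
  have h := pq_gen n K (x := Mw [a] * br [Letter.i, Letter.q l]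
      - br [Letter.i, Letter.q l] * Mw [a]) (Or.inr ⟨a, l, Or.inr (Or.inl rfl)⟩)
  rw [map_sub, map_mul, map_mul, sub_eq_zero] at h
  exact h

theorem t2_central (l : Fin n) : ∀ y, Commute y (t2 n K l) := by
  apply central_of_comm_letters
  intro a
  have h := pq_gen n K (x := Mw [a] * br [Letter.j, Letter.q l]
      - br [Letter.j, Letter.q l] * Mw [a]) (Or.inr ⟨a, l, Or.inr (Or.inr (Or.inl rfl))⟩)
  rw [map_sub, map_mul, map_mul, sub_eq_zero] at h
  exact h

theorem t3_central (l : Fin n) : ∀ y, Commute y (t3 n K l) := by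
  apply central_of_comm_letters
  intro a
  have h := pq_gen n K (x := Mw [a] * br [Letter.k, Letter.q l]
      - br [Letter.k, Letter.q l] * Mw [a]) (Or.inr ⟨a, l, Or.inr (Or.inr (Or.inr rfl))⟩)
  rw [map_sub, map_mul, map_mul, sub_eq_zero] at h
  exact h

/-- The quaternion coordinate expansion of `2·q`. -/
theorem two_q (l : Fin n) :
    2 * La n K (Letter.q l)
      = t0 n K l - t1 n K l * La n K Letter.i - t2 n K l * La n K Letter.j
        - t3 n K l * La n K Letter.k := by
  have h2 := rel2 n K l
  rw [t0_eq, t1_eq, t2_eq, t3_eq]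
  set Q := La n K (Letter.q l)
  set Qb := La n K (Letter.qbar l)
  set I := La n K Letter.i
  set J := La n K Letter.j
  set Kk := La n K Letter.k
  have expand : Q + Qb - (I * Q - Qb * I) * I - (J * Q - Qb * J) * J
      - (Kk * Q - Qb * Kk) * Kk
      = Q + Qb - (I * Q * I + J * Q * J + Kk * Q * Kk)
        + Qb * (I * I) + Qb * (J * J) + Qb * (Kk * Kk) := by noncomm_ring
  rw [expand, sq_i, sq_j, sq_k]
  have hS : I * Q * I + J * Q * J + Kk * Q * Kk = -(2 * Qb) - Q := by
    rw [← sub_eq_zero]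
    calc I * Q * I + J * Q * J + Kk * Q * Kk - (-(2 * Qb) - Q)
        = 2 * Qb + Q + I * Q * I + J * Q * J + Kk * Q * Kk := by noncomm_ring
      _ = 0 := h2
  rw [hS]
  noncomm_ring

/-- The quaternion coordinate expansion of `2·q̄`. -/
theorem two_qbar (l : Fin n) :
    2 * La n K (Letter.qbar l)
      = t0 n K l + t1 n K l * La n K Letter.i + t2 n K l * La n K Letter.j
        + t3 n K l * La n K Letter.k := by
  have h2 := rel2 n K l
  rw [t0_eq, t1_eq, t2_eq, t3_eq]
  set Q := La n K (Letter.q l)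
  set Qb := La n K (Letter.qbar l)
  set I := La n K Letter.i
  set J := La n K Letter.j
  set Kk := La n K Letter.k
  have expand : Q + Qb + (I * Q - Qb * I) * I + (J * Q - Qb * J) * J
      + (Kk * Q - Qb * Kk) * Kk
      = Q + Qb + (I * Q * I + J * Q * J + Kk * Q * Kk)
        - Qb * (I * I) - Qb * (J * J) - Qb * (Kk * Kk) := by noncomm_ring
  rw [expand, sq_i, sq_j, sq_k]
  have hS : I * Q * I + J * Q * J + Kk * Q * Kk = -(2 * Qb) - Q := by
    rw [← sub_eq_zero]
    calc I * Q * I + J * Q * J + Kk * Q * Kk - (-(2 * Qb) - Q)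
        = 2 * Qb + Q + I * Q * I + J * Q * J + Kk * Q * Kk := by noncomm_ring
      _ = 0 := h2
  rw [hS]
  noncomm_ring

end Traces

end Stmt0

namespace Stmt0

open Letter

set_option maxHeartbeats 1000000
set_option synthInstance.maxHeartbeats 400000

section Quat

variable (n : ℕ) (K : Type*) [Field K]

/-- Center of the quotient. -/
noncomputable abbrev Zc := Subring.center ((Iideal n K).ringCon.Quotient)

noncomputable def qbasis :
    QuaternionAlgebra.Basis ((Iideal n K).ringCon.Quotient) (-1 : Zc n K) 0 (-1 : Zc n K) where
  i := La n K Letter.i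
  j := La n K Letter.j
  k := La n K Letter.k
  i_mul_i := by rw [sq_i]; simp only [Algebra.smul_def]; simp
  j_mul_j := by rw [sq_j, Algebra.smul_def]; simp
  i_mul_j := mul_ij n K
  j_mul_i := by rw [mul_ji]; simp only [Algebra.smul_def]; simp

noncomputable def phi :
    QuaternionAlgebra (Zc n K) (-1) 0 (-1) →ₐ[Zc n K] (Iideal n K).ringCon.Quotient :=
  (qbasis n K).liftHom

theorem phi_mk (a b c d : Zc n K) :
    phi n K ⟨a, b, c, d⟩
      = (a : (Iideal n K).ringCon.Quotient) + (b : (Iideal n K).ringCon.Quotient) * La n K Letter.i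
        + (c : (Iideal n K).ringCon.Quotient) * La n K Letter.j
        + (d : (Iideal n K).ringCon.Quotient) * La n K Letter.k := rfl

theorem star_mk (a b c d : Zc n K) :
    star (⟨a, b, c, d⟩ : QuaternionAlgebra (Zc n K) (-1) 0 (-1)) = ⟨a, -b, -c, -d⟩ := by
  rw [QuaternionAlgebra.star_mk, zero_mul, add_zero]

/-- Central trace coordinates as elements of the center. -/
noncomputable def ct0 (l : Fin n) : Zc n K :=
  ⟨t0 n K l, Subring.mem_center_iff.mpr (t0_central n K l)⟩
noncomputable def ct1 (l : Fin n) : Zc n K :=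
  ⟨t1 n K l, Subring.mem_center_iff.mpr (t1_central n K l)⟩
noncomputable def ct2 (l : Fin n) : Zc n K :=
  ⟨t2 n K l, Subring.mem_center_iff.mpr (t2_central n K l)⟩
noncomputable def ct3 (l : Fin n) : Zc n K :=
  ⟨t3 n K l, Subring.mem_center_iff.mpr (t3_central n K l)⟩

@[simp] theorem ct0_coe (l : Fin n) :
    ((ct0 n K l : (Iideal n K).ringCon.Quotient)) = t0 n K l := rfl
@[simp] theorem ct1_coe (l : Fin n) :
    ((ct1 n K l : (Iideal n K).ringCon.Quotient)) = t1 n K l := rfl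
@[simp] theorem ct2_coe (l : Fin n) :
    ((ct2 n K l : (Iideal n K).ringCon.Quotient)) = t2 n K l := rfl
@[simp] theorem coe_two :
    ((2 : Zc n K) : (Iideal n K).ringCon.Quotient) = 2 := rfl

@[simp] theorem ct3_coe (l : Fin n) :
    ((ct3 n K l : (Iideal n K).ringCon.Quotient)) = t3 n K l := rfl

/-- Sign of a word. -/
def sgn (w : List (Letter n)) : ℤ := (-1) ^ (w.filter (fun a => a.isE)).length

@[simp] theorem sgn_q (l : Fin n) : sgn n [Letter.q l] = 1 := by simp [sgn, Letter.isE]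
@[simp] theorem sgn_qbar (l : Fin n) : sgn n [Letter.qbar l] = 1 := by simp [sgn, Letter.isE]
@[simp] theorem sgn_i : sgn n [Letter.i] = -1 := by simp [sgn, Letter.isE]
@[simp] theorem sgn_j : sgn n [Letter.j] = -1 := by simp [sgn, Letter.isE]
@[simp] theorem sgn_k : sgn n [Letter.k] = -1 := by simp [sgn, Letter.isE]

theorem letter_pair (a : Letter n) :
    ∃ r : QuaternionAlgebra (Zc n K) (-1) 0 (-1),
      (2 : ℤ) • La n K a = phi n K r ∧
      (sgn n [a] * 2 : ℤ) • La n K a.conj = phi n K (star r) := by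
  cases a with
  | q l =>
    refine ⟨⟨ct0 n K l, -ct1 n K l, -ct2 n K l, -ct3 n K l⟩, ?_, ?_⟩
    · calc (2 : ℤ) • La n K (Letter.q l) = 2 * La n K (Letter.q l) := by
            rw [zsmul_eq_mul]; norm_num
      _ = t0 n K l - t1 n K l * La n K Letter.i - t2 n K l * La n K Letter.j
            - t3 n K l * La n K Letter.k := two_q n K l
      _ = _ := by rw [phi_mk]; simp only [NegMemClass.coe_neg, ct0_coe, ct1_coe, ct2_coe, ct3_coe]
                  (try noncomm_ring)
    · rw [star_mk]
      calc (sgn n [Letter.q l] * 2 : ℤ) • La n K (Letter.q l).conj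
          = 2 * La n K (Letter.qbar l) := by
            rw [zsmul_eq_mul]; simp [Letter.conj]
      _ = t0 n K l + t1 n K l * La n K Letter.i + t2 n K l * La n K Letter.j
            + t3 n K l * La n K Letter.k := two_qbar n K l
      _ = _ := by rw [phi_mk]; simp only [neg_neg, ct0_coe, ct1_coe, ct2_coe, ct3_coe]
                  (try noncomm_ring)
  | qbar l =>
    refine ⟨⟨ct0 n K l, ct1 n K l, ct2 n K l, ct3 n K l⟩, ?_, ?_⟩
    · calc (2 : ℤ) • La n K (Letter.qbar l) = 2 * La n K (Letter.qbar l) := by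
            rw [zsmul_eq_mul]; norm_num
      _ = t0 n K l + t1 n K l * La n K Letter.i + t2 n K l * La n K Letter.j
            + t3 n K l * La n K Letter.k := two_qbar n K l
      _ = _ := by rw [phi_mk]; simp only [ct0_coe, ct1_coe, ct2_coe, ct3_coe]; (try noncomm_ring)
    · rw [star_mk]
      calc (sgn n [Letter.qbar l] * 2 : ℤ) • La n K (Letter.qbar l).conj
          = 2 * La n K (Letter.q l) := by
            rw [zsmul_eq_mul]; simp [Letter.conj]
      _ = t0 n K l - t1 n K l * La n K Letter.i - t2 n K l * La n K Letter.j
            - t3 n K l * La n K Letter.k := two_q n K l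
      _ = _ := by rw [phi_mk]; simp only [NegMemClass.coe_neg, ct0_coe, ct1_coe, ct2_coe, ct3_coe]
                  (try noncomm_ring)
  | i =>
    refine ⟨⟨0, 2, 0, 0⟩, ?_, ?_⟩
    · rw [phi_mk]
      simp only [zsmul_eq_mul, coe_two, ZeroMemClass.coe_zero, Int.cast_ofNat]
      (try push_cast)
      (try noncomm_ring)
    · rw [star_mk, phi_mk]
      simp only [sgn_i, Letter.conj, zsmul_eq_mul, coe_two, ZeroMemClass.coe_zero,
        NegMemClass.coe_neg]
      (try push_cast)
      (try noncomm_ring)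
  | j =>
    refine ⟨⟨0, 0, 2, 0⟩, ?_, ?_⟩
    · rw [phi_mk]
      simp only [zsmul_eq_mul, coe_two, ZeroMemClass.coe_zero, Int.cast_ofNat]
      (try push_cast)
      (try noncomm_ring)
    · rw [star_mk, phi_mk]
      simp only [sgn_j, Letter.conj, zsmul_eq_mul, coe_two, ZeroMemClass.coe_zero,
        NegMemClass.coe_neg]
      (try push_cast)
      (try noncomm_ring)
  | k =>
    refine ⟨⟨0, 0, 0, 2⟩, ?_, ?_⟩
    · rw [phi_mk]
      simp only [zsmul_eq_mul, coe_two, ZeroMemClass.coe_zero, Int.cast_ofNat]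
      (try push_cast)
      (try noncomm_ring)
    · rw [star_mk, phi_mk]
      simp only [sgn_k, Letter.conj, zsmul_eq_mul, coe_two, ZeroMemClass.coe_zero,
        NegMemClass.coe_neg]
      (try push_cast)
      (try noncomm_ring)

end Quat

end Stmt0

namespace Stmt0

open Letter

set_option maxHeartbeats 1000000
set_option synthInstance.maxHeartbeats 400000

section Main

variable (n : ℕ) (K : Type*) [Field K]

theorem sgn_cons (a : Letter n) (Y : List (Letter n)) :
    sgn n (a :: Y) = sgn n [a] * sgn n Y := by
  simp only [sgn, List.filter_cons]
  cases h : Letter.isE a <;> simp [h, pow_succ] <;> ring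

theorem star_mul' (r p : QuaternionAlgebra (Zc n K) (-1) 0 (-1)) :
    star (r * p) = star p * star r := by
  obtain ⟨a, b, c, d⟩ := r
  obtain ⟨a', b', c', d'⟩ := p
  rw [star_mk, star_mk, QuaternionAlgebra.mk_mul_mk, star_mk, QuaternionAlgebra.mk_mul_mk]
  have hcq : ∀ x y : Zc n K, ((x : (Iideal n K).ringCon.Quotient) * (y : (Iideal n K).ringCon.Quotient))
      = (y : (Iideal n K).ringCon.Quotient) * (x : (Iideal n K).ringCon.Quotient) :=
    fun x y => Subring.mem_center_iff.mp y.2 x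
  ext <;> simp [hcq] <;> noncomm_ring

theorem main_pair (Y : List (Letter n)) :
    ∃ p : QuaternionAlgebra (Zc n K) (-1) 0 (-1),
      ((2 : ℤ) ^ Y.length) • pq n K (Mw Y) = phi n K p ∧
      ((sgn n Y * 2 ^ Y.length : ℤ)) • pq n K (Mw ((Y.map Letter.conj).reverse))
        = phi n K (star p) := by
  induction Y with
  | nil =>
    refine ⟨1, ?_, ?_⟩
    · rw [Mw_nil, map_one, map_one]
      simp
    · rw [show star (1 : QuaternionAlgebra (Zc n K) (-1) 0 (-1)) = 1 by ext <;> simp]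
      simp only [List.map_nil, List.reverse_nil]
      rw [Mw_nil, map_one, map_one]
      simp [sgn]
  | cons a Y ih =>
    obtain ⟨p, h1, h2⟩ := ih
    obtain ⟨r, g1, g2⟩ := letter_pair n K a
    refine ⟨r * p, ?_, ?_⟩
    · rw [map_mul, ← g1, ← h1, Mw_cons, map_mul]
      rw [smul_mul_assoc, mul_smul_comm, smul_smul]
      rw [List.length_cons]
      congr 1
      ring
    · rw [star_mul' n K, map_mul, ← h2, ← g2]
      have hrev : ((a :: Y).map Letter.conj).reverse
          = ((Y.map Letter.conj).reverse) ++ [Letter.conj a] := by simp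
      rw [hrev, Mw_append, map_mul]
      rw [smul_mul_assoc, mul_smul_comm, smul_smul]
      congr 1
      rw [sgn_cons, List.length_cons]
      ring

end Main

end Stmt0

namespace Stmt0

open Letter

set_option maxHeartbeats 1000000
set_option synthInstance.maxHeartbeats 400000

section Final

variable (n : ℕ) (K : Type*) [Field K]

theorem final (hK : (2 : K) ≠ 0) (X Y : List (Letter n)) :
    Mw X * br Y - br Y * Mw X ∈ Iideal n K := by
  rw [mem_Iideal_iff, map_sub, map_mul, map_mul, sub_eq_zero]
  obtain ⟨p, h1, h2⟩ := main_pair n K Y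
  have hbru : (br Y : FA n K) = Mw Y + (sgn n Y) • Mw ((Y.map Letter.conj).reverse) := by
    rw [br]
    congr 1
    rw [← Int.cast_smul_eq_zsmul K, sgn]
    norm_cast
  set B := pq n K (br Y) with hB
  have hbr : ((2 : ℤ) ^ Y.length) • B = phi n K (p + star p) := by
    rw [hB, hbru, map_add, map_zsmul, smul_add, smul_smul,
      mul_comm ((2 : ℤ) ^ Y.length) (sgn n Y), h1, h2, map_add]
  have hcent : ∀ x, x * phi n K (p + star p) = phi n K (p + star p) * x := by
    intro x
    have hself : p + star p
        = ((2 * p.re : Zc n K) : QuaternionAlgebra (Zc n K) (-1) 0 (-1)) :=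
      by rw [QuaternionAlgebra.self_add_star', zero_mul, add_zero]
    rw [hself]
    show x * phi n K ⟨2 * p.re, 0, 0, 0⟩ = phi n K ⟨2 * p.re, 0, 0, 0⟩ * x
    rw [phi_mk]
    simp only [ZeroMemClass.coe_zero, zero_mul, add_zero]
    exact Subring.mem_center_iff.mp (2 * p.re).2 x
  set c : (Iideal n K).ringCon.Quotient := (((2 : ℤ) ^ Y.length : ℤ) : (Iideal n K).ringCon.Quotient) with hcdef
  set z := phi n K (p + star p) with hz
  have hzc : c * B = z := by rw [hcdef, ← zsmul_eq_mul, hbr]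
  have hcast : c = pq n K (algebraMap K (FA n K) ((2 : K) ^ Y.length)) := by
    rw [hcdef]
    push_cast
    congr 1
  have hu : pq n K (algebraMap K (FA n K) (((2 : K) ^ Y.length)⁻¹)) * c = 1 := by
    rw [hcast, ← map_mul, ← map_mul, inv_mul_cancel₀ (pow_ne_zero _ hK), map_one, map_one]
  set u := pq n K (algebraMap K (FA n K) (((2 : K) ^ Y.length)⁻¹)) with hu_def
  have hcomm_c : ∀ x : (Iideal n K).ringCon.Quotient, Commute c x := fun x => by
    rw [hcdef]; exact Int.cast_commute _ x
  set x := pq n K (Mw X) with hx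
  calc x * B = (u * c) * (x * B) := by rw [hu, one_mul]
    _ = u * ((c * x) * B) := by rw [mul_assoc, ← mul_assoc c x B]
    _ = u * ((x * c) * B) := by rw [(hcomm_c x).eq]
    _ = u * (x * (c * B)) := by rw [mul_assoc x c B]
    _ = u * (x * z) := by rw [hzc]
    _ = u * (z * x) := by rw [hcent x]
    _ = u * ((c * B) * x) := by rw [hzc]
    _ = (u * (c * B)) * x := by rw [← mul_assoc]
    _ = ((u * c) * B) * x := by rw [← mul_assoc u c B]
    _ = B * x := by rw [hu, one_mul]

end Final

end Stmt0

/-- For all monomials `X` and `Y` in the free monoid on `𝒜`,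
the polynomial `X·[Y] − [Y]·X` lies in the ideal `ℐ`. -/
theorem monomial_bracket_commutator_mem_ideal
    (n : ℕ) (hn : 1 ≤ n) (K : Type*) [Field K] (hK : (2 : K) ≠ 0)
    (X Y : List (Letter n)) :
    Mw X * br Y - br Y * Mw X ∈ Iideal n K := by
  exact Stmt0.final n K hK X Y
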